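/- The function $\mathbf{f}(\varphi) = \frac{1}{8\sin(\varphi/2)}\left(\frac{2}{\sin^2(\varphi/2)} - 1\right) + \cos\varphi$ satisfies $\mathbf{f}''(\varphi) > 0$ for all $\varphi \in (0, 2\pi)$. -/

import Mathlib

open Real

noncomputable def fbold (φ : ℝ) : ℝ :=
  1 / (8 * Real.sin (φ / 2)) * (2 / Real.sin (φ / 2) ^ 2 - 1) + Real.cos φ

/-!
With `s = sin (φ / 2) ∈ (0, 1]` and `cos φ = 1 - 2 s²`, we have `fbold φ = P s` for
`P s = 1 / (4 s³) - 1 / (8 s) + 1 - 2 s²`. The second-order chain rule gives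
`fbold'' φ = (P'' s · cos² (φ / 2) - P' s · s) / 4 = (24 - 20 s² + s⁴ - 32 s⁵ + 64 s⁷) / (32 s⁵)`,
and the numerator is positive on `(0, 1]` because `64 s⁷ - 32 s⁵ + 4 s³ = 4 s³ (4 s² - 1)² ≥ 0`
while `24 - 20 s² - 4 s³ + s⁴ > 0` there.
-/

open Filter Topology

theorem iteratedDeriv_two_eq_of_hasDerivAt {𝕜 F : Type*} [NontriviallyNormedField 𝕜]
    [NormedAddCommGroup F] [NormedSpace 𝕜 F] {f f' : 𝕜 → F} {f'' : F} {x : 𝕜}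
    (hf : ∀ᶠ y in 𝓝 x, HasDerivAt f (f' y) y) (hf' : HasDerivAt f' f'' x) :
    iteratedDeriv 2 f x = f'' := by
  have hderiv : deriv f =ᶠ[𝓝 x] f' := hf.mono fun _ hy => hy.deriv
  rw [iteratedDeriv_succ, iteratedDeriv_one, hderiv.deriv_eq, hf'.deriv]

noncomputable def fboldProfile (s : ℝ) : ℝ :=
  s⁻¹ ^ 3 / 4 - s⁻¹ / 8 + 1 - 2 * s ^ 2

theorem fbold_eq_fboldProfile_comp : fbold = fboldProfile ∘ fun φ => sin (φ / 2) := by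
  funext φ
  have hcos : cos φ = 1 - 2 * sin (φ / 2) ^ 2 := by
    rw [← cos_two_mul_eq_one_sub, mul_div_cancel₀ φ two_ne_zero]
  simp only [fbold, fboldProfile, Function.comp_apply, hcos, div_eq_mul_inv]
  ring

theorem hasDerivAt_fboldProfile {s : ℝ} (hs : s ≠ 0) :
    HasDerivAt fboldProfile (-(3 / 4) * s⁻¹ ^ 4 + s⁻¹ ^ 2 / 8 - 4 * s) s := by
  have hinv := hasDerivAt_inv hs
  have := ((((hinv.pow 3).div_const 4).sub (hinv.div_const 8)).add_const 1).sub
    (((hasDerivAt_id s).pow 2).const_mul 2)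
  refine this.congr_deriv ?_
  norm_num
  field_simp
  ring

theorem iteratedDeriv_two_fboldProfile {s : ℝ} (hs : s ≠ 0) :
    iteratedDeriv 2 fboldProfile s = 3 * s⁻¹ ^ 5 - s⁻¹ ^ 3 / 4 - 4 := by
  refine iteratedDeriv_two_eq_of_hasDerivAt
    ((isOpen_ne.eventually_mem hs).mono fun _ hy => hasDerivAt_fboldProfile hy) ?_
  have hinv := hasDerivAt_inv hs
  have := (((hinv.pow 4).const_mul (-(3 / 4))).add ((hinv.pow 2).div_const 8)).sub
    ((hasDerivAt_id s).const_mul 4)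
  refine this.congr_deriv ?_
  norm_num
  field_simp
  ring

theorem contDiffAt_fboldProfile {s : ℝ} (hs : s ≠ 0) : ContDiffAt ℝ 2 fboldProfile s := by
  unfold fboldProfile
  fun_prop (disch := exact hs)

theorem hasDerivAt_sin_half (x : ℝ) : HasDerivAt (fun φ => sin (φ / 2)) (cos (x / 2) / 2) x := by
  refine ((hasDerivAt_sin (x / 2)).comp x ((hasDerivAt_id x).div_const 2)).congr_deriv ?_
  ring

theorem iteratedDeriv_two_sin_half (x : ℝ) :
    iteratedDeriv 2 (fun φ => sin (φ / 2)) x = -(sin (x / 2) / 4) := by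
  refine iteratedDeriv_two_eq_of_hasDerivAt (Eventually.of_forall hasDerivAt_sin_half) ?_
  have hcos := (hasDerivAt_cos (x / 2)).comp x ((hasDerivAt_id x).div_const 2)
  refine (hcos.div_const 2).congr_deriv ?_
  ring

theorem fbold_numerator_pos {s : ℝ} (hs : 0 < s) (hs1 : s ≤ 1) :
    0 < 24 - 20 * s ^ 2 + s ^ 4 - 32 * s ^ 5 + 64 * s ^ 7 := by
  have hsq : 0 ≤ 4 * s ^ 3 * (4 * s ^ 2 - 1) ^ 2 := by positivity
  have h2 : s ^ 2 ≤ 1 := pow_le_one₀ hs.le hs1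
  have h3 : s ^ 3 ≤ 1 := pow_le_one₀ hs.le hs1
  have h4 : 0 < s ^ 4 := by positivity
  nlinarith

theorem fbold_second_deriv_pos :
    ∀ φ ∈ Set.Ioo (0 : ℝ) (2 * π), 0 < iteratedDeriv 2 fbold φ := by
  rintro φ ⟨hφ0, hφ2π⟩
  have hs : 0 < sin (φ / 2) := sin_pos_of_pos_of_lt_pi (by linarith) (by linarith)
  have hsin : ContDiffAt ℝ 2 (fun φ => sin (φ / 2)) φ := by fun_prop
  have hformula : iteratedDeriv 2 fbold φ
      = (24 - 20 * sin (φ / 2) ^ 2 + sin (φ / 2) ^ 4 - 32 * sin (φ / 2) ^ 5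
          + 64 * sin (φ / 2) ^ 7) / (32 * sin (φ / 2) ^ 5) := by
    rw [fbold_eq_fboldProfile_comp,
      iteratedDeriv_comp_two (f := fun φ => sin (φ / 2)) (contDiffAt_fboldProfile hs.ne') hsin,
      iteratedDeriv_two_fboldProfile hs.ne', (hasDerivAt_fboldProfile hs.ne').deriv,
      (hasDerivAt_sin_half φ).deriv, iteratedDeriv_two_sin_half, div_pow, cos_sq']
    field_simp
    ring
  rw [hformula]
  exact div_pos (fbold_numerator_pos hs (sin_le_one _)) (by positivity)
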